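/- arXiv:2410.09660 — 5 statements merged into one kernel-verified Lean document; each statement's English description precedes it below -/
import Mathlib

section
/- Let Φ be a symmetric gauge function on ℝ^d and let p ≥ 1. Then the ℓp-transformation Φ^(p)(x) := (Φ(|x₁|^p, …, |x_d|^p))^{1/p} is also a symmetric gauge function; in particular, it satisfies the triangle inequality. -/
/-- A symmetric gauge function on `ℝ^d`: a norm invariant under coordinate
permutations and sign changes of individual coordinates. -/
def IsSymmetricGauge {d : ℕ} (Φ : (Fin d → ℝ) → ℝ) : Prop :=
  (∀ x, 0 ≤ Φ x) ∧
  (∀ x, Φ x = 0 ↔ x = 0) ∧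
  (∀ (a : ℝ) (x : Fin d → ℝ), Φ (a • x) = |a| * Φ x) ∧
  (∀ x y : Fin d → ℝ, Φ (x + y) ≤ Φ x + Φ y) ∧
  (∀ (σ : Equiv.Perm (Fin d)) (x : Fin d → ℝ), Φ (x ∘ σ) = Φ x) ∧
  (∀ (ε : Fin d → ℝ), (∀ i, ε i = 1 ∨ ε i = -1) →
    ∀ x : Fin d → ℝ, Φ (fun i => ε i * x i) = Φ x)


/-- The `ℓp`-transformation `Φ^(p)(x) = (Φ(|x₁|^p, …, |x_d|^p))^{1/p}`. -/
noncomputable def lpTransform {d : ℕ} (Φ : (Fin d → ℝ) → ℝ) (p : ℝ) :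
    (Fin d → ℝ) → ℝ :=
  fun x => (Φ (fun i => |x i| ^ p)) ^ (1 / p)

/-!
A symmetric gauge function is monotone in the absolute values of the coordinates: a vector with
one coordinate shrunk in absolute value is a convex combination of the vector and its reflection
in that coordinate. With the convexity of `t ↦ |t| ^ p` this makes `F x := Φ(|x|^p)` convex and
positively homogeneous of degree `p`, and the `p`-th root of such a function is subadditive:
after rescaling `x` and `y` onto the level set `{F = 1}`, the vector
`(x + y) / (F x ^ (1/p) + F y ^ (1/p))` is a convex combination of the rescaled vectors.
-/

open Set

theorem ConvexOn.rpow_one_div_add_le {E : Type*} [AddCommGroup E] [Module ℝ E] {F : E → ℝ}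
    {p : ℝ} (hp : 0 < p) (hF : ConvexOn ℝ univ F) (hF_nonneg : ∀ x, 0 ≤ F x)
    (hF_eq_zero : ∀ x, F x = 0 → x = 0)
    (hF_smul : ∀ c : ℝ, 0 < c → ∀ x, F (c • x) = c ^ p * F x)
    (x y : E) : F (x + y) ^ (1 / p) ≤ F x ^ (1 / p) + F y ^ (1 / p) := by
  rcases eq_or_ne x 0 with rfl | hx
  · simpa using Real.rpow_nonneg (hF_nonneg 0) _
  rcases eq_or_ne y 0 with rfl | hy
  · simpa using Real.rpow_nonneg (hF_nonneg 0) _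
  have hFx : 0 < F x := (hF_nonneg x).lt_of_ne' (mt (hF_eq_zero x) hx)
  have hFy : 0 < F y := (hF_nonneg y).lt_of_ne' (mt (hF_eq_zero y) hy)
  set a := F x ^ (1 / p)
  set b := F y ^ (1 / p)
  have ha : 0 < a := Real.rpow_pos_of_pos hFx _
  have hb : 0 < b := Real.rpow_pos_of_pos hFy _
  have h_normalize : ∀ z, 0 < F z → F ((F z ^ (1 / p))⁻¹ • z) = 1 := fun z hz => by
    rw [hF_smul _ (inv_pos.2 (Real.rpow_pos_of_pos hz _)), Real.inv_rpow (Real.rpow_nonneg hz.le _),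
      one_div, Real.rpow_inv_rpow hz.le hp.ne', inv_mul_cancel₀ hz.ne']
  have hsum :
      x + y = (a + b) • ((a / (a + b)) • (a⁻¹ • x) + (b / (a + b)) • (b⁻¹ • y)) := by
    rw [smul_add, smul_smul, smul_smul, smul_smul, smul_smul]
    field_simp
    simp
  have hconv : F ((a / (a + b)) • (a⁻¹ • x) + (b / (a + b)) • (b⁻¹ • y)) ≤ 1 := by
    refine (hF.2 trivial trivial (by positivity) (by positivity) (by field_simp)).trans_eq ?_
    rw [h_normalize x hFx, h_normalize y hFy, smul_eq_mul, smul_eq_mul]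
    field_simp
  rw [one_div, Real.rpow_inv_le_iff_of_pos (hF_nonneg _) (by positivity) hp, hsum,
    hF_smul _ (by positivity)]
  exact mul_le_of_le_one_right (by positivity) hconv

namespace IsSymmetricGauge

variable {d : ℕ} {Φ : (Fin d → ℝ) → ℝ}

theorem map_update_le (hΦ : IsSymmetricGauge Φ) (w : Fin d → ℝ) (i : Fin d) {t : ℝ}
    (ht : |t| ≤ |w i|) : Φ (Function.update w i t) ≤ Φ w := by
  obtain ⟨-, -, hsmul, hadd, -, hsign⟩ := hΦ
  rcases eq_or_ne (w i) 0 with hwi | hwi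
  · obtain rfl : t = 0 := by simpa [hwi] using ht
    rw [← hwi, Function.update_eq_self]
  set s := t / w i
  obtain ⟨hs₁, hs₂⟩ : -1 ≤ s ∧ s ≤ 1 :=
    abs_le.1 (by rw [abs_div]; exact div_le_one_of_le₀ ht (abs_nonneg _))
  set ε : Fin d → ℝ := fun j => if j = i then -1 else 1
  have hε : ∀ j, ε j = 1 ∨ ε j = -1 := fun j => by by_cases h : j = i <;> simp [ε, h]
  have hcomb : Function.update w i t
      = ((1 + s) / 2) • w + ((1 - s) / 2) • (fun j => ε j * w j) := by
    funext j
    simp only [Pi.add_apply, Pi.smul_apply, smul_eq_mul, ε]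
    by_cases hj : j = i
    · subst hj
      simp only [Function.update_self, if_pos, s]
      field_simp
      ring
    · simp only [Function.update_of_ne hj, if_neg hj]
      ring
  calc Φ (Function.update w i t)
      ≤ Φ (((1 + s) / 2) • w) + Φ (((1 - s) / 2) • (fun j => ε j * w j)) :=
        hcomb ▸ hadd _ _
    _ = Φ w := by
      rw [hsmul, hsmul, hsign ε hε, abs_of_nonneg (by linarith), abs_of_nonneg (by linarith)]
      ring

theorem map_le_map_of_abs_le (hΦ : IsSymmetricGauge Φ) {u v : Fin d → ℝ}
    (h : ∀ i, |u i| ≤ |v i|) : Φ u ≤ Φ v := by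
  classical
  suffices ∀ s : Finset (Fin d), Φ (s.piecewise u v) ≤ Φ v by simpa using this Finset.univ
  intro s
  induction s using Finset.induction_on with
  | empty => simp
  | insert i s hi ih =>
    rw [Finset.piecewise_insert]
    refine (hΦ.map_update_le _ i ?_).trans ih
    rw [Finset.piecewise_eq_of_notMem _ _ _ hi]
    exact h i

theorem convexOn_rpow_abs (hΦ : IsSymmetricGauge Φ) {p : ℝ} (hp : 1 ≤ p) :
    ConvexOn ℝ univ fun x : Fin d → ℝ => Φ (fun i => |x i| ^ p) := by
  have ⟨_, _, hsmul, hadd, _, _⟩ := hΦ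
  refine ⟨convex_univ, fun x _ y _ a b ha hb hab => ?_⟩
  have hcoord : ∀ i, |a * x i + b * y i| ^ p ≤ a * |x i| ^ p + b * |y i| ^ p := fun i =>
    calc |a * x i + b * y i| ^ p ≤ (a * |x i| + b * |y i|) ^ p := by
          gcongr
          calc |a * x i + b * y i| ≤ |a * x i| + |b * y i| := abs_add_le _ _
            _ = a * |x i| + b * |y i| := by
              rw [abs_mul, abs_mul, abs_of_nonneg ha, abs_of_nonneg hb]
      _ ≤ a * |x i| ^ p + b * |y i| ^ p :=
          (convexOn_rpow hp).2 (abs_nonneg (x i)) (abs_nonneg (y i)) ha hb hab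
  calc Φ (fun i => |(a • x + b • y) i| ^ p)
      ≤ Φ (a • (fun i => |x i| ^ p) + b • (fun i => |y i| ^ p)) := by
        refine hΦ.map_le_map_of_abs_le fun i => ?_
        simp only [Pi.add_apply, Pi.smul_apply, smul_eq_mul]
        have h0 : 0 ≤ |a * x i + b * y i| ^ p := Real.rpow_nonneg (abs_nonneg _) p
        rw [abs_of_nonneg h0, abs_of_nonneg (h0.trans (hcoord i))]
        exact hcoord i
    _ ≤ Φ (a • (fun i => |x i| ^ p)) + Φ (b • (fun i => |y i| ^ p)) := hadd _ _
    _ = a • Φ (fun i => |x i| ^ p) + b • Φ (fun i => |y i| ^ p) := by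
        rw [hsmul, hsmul, abs_of_nonneg ha, abs_of_nonneg hb, smul_eq_mul, smul_eq_mul]

theorem map_rpow_abs_smul (hΦ : IsSymmetricGauge Φ) (p c : ℝ) (x : Fin d → ℝ) :
    Φ (fun i => |(c • x) i| ^ p) = |c| ^ p * Φ (fun i => |x i| ^ p) := by
  rw [← abs_of_nonneg (Real.rpow_nonneg (abs_nonneg c) p), ← hΦ.2.2.1]
  congr 1
  funext i
  simp [abs_mul, Real.mul_rpow (abs_nonneg c) (abs_nonneg (x i))]

theorem map_rpow_abs_eq_zero_iff (hΦ : IsSymmetricGauge Φ) {p : ℝ} (hp : p ≠ 0)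
    (x : Fin d → ℝ) : Φ (fun i => |x i| ^ p) = 0 ↔ x = 0 := by
  rw [hΦ.2.1, funext_iff, funext_iff]
  simp [Real.rpow_eq_zero (abs_nonneg _) hp]

end IsSymmetricGauge

section lpTransform

variable {d : ℕ} {Φ : (Fin d → ℝ) → ℝ} {p : ℝ}

theorem lpTransform_add_le (hΦ : IsSymmetricGauge Φ) (hp : 1 ≤ p) (x y : Fin d → ℝ) :
    lpTransform Φ p (x + y) ≤ lpTransform Φ p x + lpTransform Φ p y :=
  (hΦ.convexOn_rpow_abs hp).rpow_one_div_add_le (by linarith) (fun _ => hΦ.1 _)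
    (fun x => (hΦ.map_rpow_abs_eq_zero_iff (by linarith) x).1)
    (fun c hc x => by rw [hΦ.map_rpow_abs_smul, abs_of_pos hc]) x y

theorem lpTransform_smul (hΦ : IsSymmetricGauge Φ) (hp : p ≠ 0) (c : ℝ) (x : Fin d → ℝ) :
    lpTransform Φ p (c • x) = |c| * lpTransform Φ p x := by
  simp only [lpTransform]
  rw [hΦ.map_rpow_abs_smul, Real.mul_rpow (by positivity) (hΦ.1 _),
    ← Real.rpow_mul (abs_nonneg c), mul_one_div_cancel hp, Real.rpow_one]

theorem lpTransform_eq_zero_iff (hΦ : IsSymmetricGauge Φ) (hp : p ≠ 0) (x : Fin d → ℝ) :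
    lpTransform Φ p x = 0 ↔ x = 0 := by
  simp only [lpTransform]
  rw [Real.rpow_eq_zero (hΦ.1 _) (one_div_ne_zero hp), hΦ.map_rpow_abs_eq_zero_iff hp]

end lpTransform

theorem lpTransform_isSymmetricGauge {d : ℕ} (Φ : (Fin d → ℝ) → ℝ)
    (hΦ : IsSymmetricGauge Φ) (p : ℝ) (hp : 1 ≤ p) :
    IsSymmetricGauge (lpTransform Φ p) ∧
      ∀ x y : Fin d → ℝ,
        lpTransform Φ p (x + y) ≤ lpTransform Φ p x + lpTransform Φ p y := by
  have ⟨hnonneg, _, _, _, hperm, _⟩ := hΦ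
  have hp₀ : p ≠ 0 := by linarith
  refine ⟨⟨fun x => Real.rpow_nonneg (hnonneg _) _, lpTransform_eq_zero_iff hΦ hp₀,
    lpTransform_smul hΦ hp₀, lpTransform_add_le hΦ hp,
    fun σ x => congrArg (· ^ (1 / p)) (hperm σ fun i => |x i| ^ p), ?_⟩,
    lpTransform_add_le hΦ hp⟩
  intro ε hε x
  have hε_abs : ∀ i, |ε i| = 1 := fun i => by rcases hε i with h | h <;> simp [h]
  simp only [lpTransform, abs_mul, hε_abs, one_mul]
end

section
/- Let Φ be a symmetric gauge function on ℝ^d and let ‖A‖_Φ := Φ(λ(A)) be the associated unitarily invariant norm on symmetric positive definite matrices, where λ(A) is the vector of eigenvalues of A. Then ‖·‖_Φ is geodesically midpoint convex with respect to the affine-invariant geometry: for all positive definite A, B, one has ‖A # B‖_Φ ≤ (‖A‖_Φ + ‖B‖_Φ)/2, where A # B is the matrix geometric mean. -/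
open Matrix

/-- The positive semidefinite square root of a positive semidefinite matrix
(removed from Mathlib; restored with its old definition). -/
noncomputable def Matrix.PosSemidef.sqrt {n 𝕜 : Type*} [Fintype n] [DecidableEq n] [RCLike 𝕜]
    [PartialOrder 𝕜] {A : Matrix n n 𝕜} (hA : A.PosSemidef) : Matrix n n 𝕜 :=
  hA.1.eigenvectorUnitary.1 * diagonal ((↑) ∘ (√·) ∘ hA.1.eigenvalues) *
  (star hA.1.eigenvectorUnitary : Matrix n n 𝕜)

/-- The matrix geometric mean `A # B = A^{1/2} (A^{-1/2} B A^{-1/2})^{1/2} A^{1/2}`. -/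
noncomputable def geomMean {d : ℕ} {A B : Matrix (Fin d) (Fin d) ℝ}
    (hA : A.PosDef) (hB : B.PosDef) : Matrix (Fin d) (Fin d) ℝ :=
  let S := hA.posSemidef.sqrt
  let h : ((S⁻¹)ᴴ * B * S⁻¹).PosSemidef :=
    hB.posSemidef.conjTranspose_mul_mul_same S⁻¹
  S * h.sqrt * S

/-! The eigenvalues of `A # B` are weakly majorized by the average of the decreasing
rearrangements of those of `A` and `B`. Indeed, in an eigenbasis of `A # B` the sum of its `k`
largest eigenvalues is a partial trace of `A # B`, which is at most the average of the same partial
traces of `A` and `B` because `A + B - 2 (A # B) ⪰ 0`, and by Ky Fan's maximum principle these are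
bounded by the sums of the `k` largest eigenvalues of `A` and of `B`. A symmetric gauge function is
monotone under weak majorization of nonnegative vectors (pair a norming functional at the smaller
vector with the rearrangement inequality and Abel summation); it is also convex and permutation
invariant. -/

namespace Matrix.PosSemidef

variable {n : Type*} [Fintype n] [DecidableEq n] {A : Matrix n n ℝ}

lemma sqrt_posSemidef (hA : A.PosSemidef) : hA.sqrt.PosSemidef := by
  have hD : (diagonal ((RCLike.ofReal ∘ (√·) ∘ hA.1.eigenvalues) : n → ℝ)).PosSemidef :=
    posSemidef_diagonal_iff.2 fun i => Real.sqrt_nonneg _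
  have h := hD.mul_mul_conjTranspose_same (hA.1.eigenvectorUnitary : Matrix n n ℝ)
  rwa [← star_eq_conjTranspose] at h

lemma sqrt_mul_sqrt (hA : A.PosSemidef) : hA.sqrt * hA.sqrt = A := by
  set U : Matrix n n ℝ := (hA.1.eigenvectorUnitary : Matrix n n ℝ)
  set D : Matrix n n ℝ := diagonal (RCLike.ofReal ∘ (√·) ∘ hA.1.eigenvalues)
  have hU : star U * U = 1 := Unitary.coe_star_mul_self _
  have hD : D * D = diagonal (RCLike.ofReal ∘ hA.1.eigenvalues) := by
    simp [D, Real.mul_self_sqrt (hA.eigenvalues_nonneg _)]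
  conv_rhs => rw [hA.1.spectral_theorem, Unitary.conjStarAlgAut_apply]
  calc hA.sqrt * hA.sqrt = U * (D * (star U * U) * D) * star U := by
        simp only [sqrt, U, D, Matrix.mul_assoc]
    _ = _ := by rw [hU, Matrix.mul_one, hD, Matrix.mul_assoc]

end Matrix.PosSemidef

section GeomMean

variable {d : ℕ} {A B : Matrix (Fin d) (Fin d) ℝ} (hA : A.PosDef) (hB : B.PosDef)

lemma geomMean_posSemidef : (geomMean hA hB).PosSemidef := by
  set S := hA.posSemidef.sqrt
  have hC : (S⁻¹ᴴ * B * S⁻¹).PosSemidef := hB.posSemidef.conjTranspose_mul_mul_same S⁻¹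
  have h := hC.sqrt_posSemidef.mul_mul_conjTranspose_same S
  rwa [hA.posSemidef.sqrt_posSemidef.1.eq] at h

lemma posSemidef_add_sub_two_smul_geomMean :
    (A + B - (2 : ℝ) • geomMean hA hB).PosSemidef := by
  set S := hA.posSemidef.sqrt
  have hC : (S⁻¹ᴴ * B * S⁻¹).PosSemidef := hB.posSemidef.conjTranspose_mul_mul_same S⁻¹
  set T := hC.sqrt
  have hG : geomMean hA hB = S * T * S := rfl
  have hSH : Sᴴ = S := hA.posSemidef.sqrt_posSemidef.1
  have hTH : Tᴴ = T := hC.sqrt_posSemidef.1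
  have hSS : S * S = A := hA.posSemidef.sqrt_mul_sqrt
  have hS : IsUnit S.det := (isUnit_iff_isUnit_det S).1 <|
    isUnit_of_mul_isUnit_left (hSS ▸ hA.isUnit)
  have hB' : S * (T * T) * S = B := by
    rw [hC.sqrt_mul_sqrt, conjTranspose_nonsing_inv, hSH]
    simp only [← Matrix.mul_assoc, mul_nonsing_inv _ hS, Matrix.one_mul]
    simp only [Matrix.mul_assoc, nonsing_inv_mul _ hS, Matrix.mul_one]
  have hXX : ((1 - T) * S)ᴴ * ((1 - T) * S) = A + B - (2 : ℝ) • geomMean hA hB := by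
    rw [hG, conjTranspose_mul, conjTranspose_sub, conjTranspose_one, hTH, hSH, ← hSS, ← hB',
      two_smul]
    noncomm_ring
  exact hXX ▸ posSemidef_conjTranspose_mul_self _

end GeomMean

open Finset

section Rearrangement

variable {d : ℕ}

noncomputable def sortDescPerm (x : Fin d → ℝ) : Equiv.Perm (Fin d) := Tuple.sort (-x)

noncomputable def sortDesc (x : Fin d → ℝ) : Fin d → ℝ := x ∘ sortDescPerm x

def prefixSum (x : Fin d → ℝ) (k : ℕ) : ℝ := ∑ i : Fin d with i.val < k, x i

def extendByZero (x : Fin d → ℝ) (n : ℕ) : ℝ := if h : n < d then x ⟨n, h⟩ else 0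

lemma prefixSum_add (x y : Fin d → ℝ) (k : ℕ) :
    prefixSum (x + y) k = prefixSum x k + prefixSum y k :=
  sum_add_distrib

lemma prefixSum_smul (c : ℝ) (x : Fin d → ℝ) (k : ℕ) :
    prefixSum (c • x) k = c * prefixSum x k := by
  simp [prefixSum, mul_sum]

lemma antitone_sortDesc (x : Fin d → ℝ) : Antitone (sortDesc x) := fun _ _ hij => by
  simpa [sortDesc, sortDescPerm] using Tuple.monotone_sort (-x) hij

lemma sum_mul_le_sum_sortDesc_mul_sortDesc (x w : Fin d → ℝ) :
    ∑ i, x i * w i ≤ ∑ i, sortDesc x i * sortDesc w i := by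
  set σ := sortDescPerm x
  set τ := sortDescPerm w
  have h : ∑ i, x i * w i = ∑ i, sortDesc x i * sortDesc w ((σ.trans τ.symm) i) := by
    rw [← Equiv.sum_comp σ]
    simp [sortDesc, σ, τ]
  rw [h]
  exact ((antitone_sortDesc x).monovary (antitone_sortDesc w)).sum_mul_comp_perm_le_sum_mul

lemma prefixSum_eq_sum_range_extendByZero (x : Fin d → ℝ) {k : ℕ} (hk : k ≤ d) :
    prefixSum x k = ∑ n ∈ range k, extendByZero x n := by
  have h := Fin.sum_univ_eq_sum_range (fun n => if n ∈ range k then extendByZero x n else 0) d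
  rw [sum_ite_mem, inter_eq_right.2 (range_subset_range.2 hk)] at h
  rw [← h, prefixSum, sum_filter]
  simp [extendByZero]

lemma sum_mul_le_sum_mul_of_prefixSum_le {x y w : Fin d → ℝ} (hw : Antitone w)
    (hw0 : ∀ i, 0 ≤ w i) (hxy : ∀ k ≤ d, prefixSum x k ≤ prefixSum y k) :
    ∑ i, x i * w i ≤ ∑ i, y i * w i := by
  set W := extendByZero w
  have hbyParts : ∀ z : Fin d → ℝ, ∑ i, z i * w i = W (d - 1) * prefixSum z d +
      ∑ n ∈ range (d - 1), (W n - W (n + 1)) * prefixSum z (n + 1) := by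
    intro z
    have hfin : ∑ i, z i * w i = ∑ n ∈ range d, W n • extendByZero z n := by
      rw [← Fin.sum_univ_eq_sum_range (fun n => W n • extendByZero z n)]
      simp [W, extendByZero, mul_comm]
    rw [hfin, sum_range_by_parts, prefixSum_eq_sum_range_extendByZero z le_rfl, smul_eq_mul,
      sub_eq_add_neg, ← sum_neg_distrib]
    congr 1
    refine sum_congr rfl fun n hn => ?_
    rw [prefixSum_eq_sum_range_extendByZero z (by grind)]
    ring
  rw [hbyParts, hbyParts]
  gcongr with n hn
  · simp only [W, extendByZero]
    split_ifs
    exacts [hw0 _, le_rfl]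
  · exact hxy d le_rfl
  · simp only [W, extendByZero, sub_nonneg]
    rw [mem_range] at hn
    rw [dif_pos (by omega), dif_pos (by omega)]
    exact hw (Fin.mk_le_mk.2 (Nat.le_succ n))
  · exact hxy _ (by grind)

lemma sum_mul_le_prefixSum_sortDesc (x c : Fin d → ℝ) {k : ℕ} (hk : k ≤ d)
    (hc0 : ∀ i, 0 ≤ c i) (hc1 : ∀ i, c i ≤ 1) (hc : ∑ i, c i = k) :
    ∑ i, x i * c i ≤ prefixSum (sortDesc x) k := by
  rcases Nat.eq_zero_or_pos d with rfl | hd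
  · simp [prefixSum]
  set y := sortDesc x
  set c' := c ∘ sortDescPerm x
  set t := y ⟨k - 1, by omega⟩
  set e : Fin d → ℝ := fun i => if i.val < k then 1 else 0
  have he : ∑ i, e i = k := by simp [e, Fin.card_filter_val_lt, hk]
  have hc' : ∑ i, c' i = k := by rw [← hc]; exact Equiv.sum_comp _ c
  have hprefix : prefixSum y k = ∑ i, y i * e i := by simp [prefixSum, sum_filter, e]
  -- `t` separates the `k` largest entries of `y` from the others
  have hterm : ∀ i, (y i - t) * (c' i - e i) ≤ 0 := by
    intro i
    by_cases hi : i.val < k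
    · refine mul_nonpos_of_nonneg_of_nonpos (sub_nonneg.2 (antitone_sortDesc x ?_)) ?_
      · exact Fin.le_def.2 (by simp; omega)
      · simpa [e, hi, c'] using hc1 _
    · refine mul_nonpos_of_nonpos_of_nonneg (sub_nonpos.2 (antitone_sortDesc x ?_)) ?_
      · exact Fin.le_def.2 (by simp; omega)
      · simpa [e, hi, c'] using hc0 _
  calc ∑ i, x i * c i = ∑ i, y i * c' i := (Equiv.sum_comp (sortDescPerm x) _).symm
    _ = ∑ i, (y i - t) * (c' i - e i) + ∑ i, y i * e i + t * (∑ i, c' i - ∑ i, e i) := by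
      simp only [mul_sub, mul_sum, ← sum_sub_distrib, ← sum_add_distrib]
      exact sum_congr rfl fun i _ => by ring
    _ ≤ prefixSum y k := by
      rw [hc', he, sub_self, mul_zero, add_zero, hprefix]
      linarith [sum_nonpos fun i (_ : i ∈ univ) => hterm i]

lemma exists_card_eq_prefixSum_sortDesc_eq_sum (x : Fin d → ℝ) {k : ℕ} (hk : k ≤ d) :
    ∃ J : Finset (Fin d), #J = k ∧ prefixSum (sortDesc x) k = ∑ j ∈ J, x j := by
  refine ⟨({i : Fin d | i.val < k} : Finset (Fin d)).map (sortDescPerm x).toEmbedding, ?_, ?_⟩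
  · simp [Fin.card_filter_val_lt, hk]
  · simp [prefixSum, sortDesc]

end Rearrangement

lemma Seminorm.exists_dual_eq_and_le {E : Type*} [AddCommGroup E] [Module ℝ E]
    (p : Seminorm ℝ E) (u : E) : ∃ g : Module.Dual ℝ E, g u = p u ∧ ∀ z, g z ≤ p z := by
  have H : ∀ c : ℝ, c • u = 0 → c • p u = 0 := fun c hc => by
    have h := map_smul_eq_mul p c u
    rw [hc, map_zero, eq_comm, mul_eq_zero, norm_eq_zero] at h
    rcases h with h | h <;> simp [h]
  set f := LinearPMap.mkSpanSingleton' (σ := RingHom.id ℝ) u (p u) H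
  obtain ⟨g, hgf, hgp⟩ :=
      Module.Dual.exists_extension_of_le_seminorm_real f.domain f.toFun (p := p) <| by
    rintro ⟨x, hx⟩
    obtain ⟨c, rfl⟩ := Submodule.mem_span_singleton.1 hx
    calc f ⟨c • u, hx⟩ = c * p u := LinearPMap.mkSpanSingleton'_apply u (p u) H c hx
      _ ≤ p (c • u) := by
        rw [map_smul_eq_mul, Real.norm_eq_abs]
        exact mul_le_mul_of_nonneg_right (le_abs_self c) (apply_nonneg p u)
  refine ⟨g, ?_, fun z => (le_abs_self _).trans (hgp z)⟩
  rw [hgf ⟨u, Submodule.mem_span_singleton_self u⟩]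
  exact LinearPMap.mkSpanSingleton'_apply_self u (p u) H _

namespace IsSymmetricGauge

variable {d : ℕ} {Φ : (Fin d → ℝ) → ℝ}

lemma map_smul (hΦ : IsSymmetricGauge Φ) (a : ℝ) (x : Fin d → ℝ) :
    Φ (a • x) = |a| * Φ x :=
  hΦ.2.2.1 a x

lemma map_add_le (hΦ : IsSymmetricGauge Φ) (x y : Fin d → ℝ) : Φ (x + y) ≤ Φ x + Φ y :=
  hΦ.2.2.2.1 x y

def toSeminorm (hΦ : IsSymmetricGauge Φ) : Seminorm ℝ (Fin d → ℝ) :=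
  Seminorm.of Φ hΦ.map_add_le (by simpa only [Real.norm_eq_abs] using hΦ.map_smul)

lemma comp_perm (hΦ : IsSymmetricGauge Φ) (σ : Equiv.Perm (Fin d)) (x : Fin d → ℝ) :
    Φ (x ∘ σ) = Φ x :=
  hΦ.2.2.2.2.1 σ x

/-- Strong isotonicity of symmetric gauge functions. -/
theorem le_of_prefixSum_sortDesc_le (hΦ : IsSymmetricGauge Φ) {u v : Fin d → ℝ}
    (hu : ∀ i, 0 ≤ u i) (huv : ∀ k ≤ d, prefixSum (sortDesc u) k ≤ prefixSum v k) :
    Φ u ≤ Φ v := by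
  obtain ⟨g, hgu, hg⟩ := hΦ.toSeminorm.exists_dual_eq_and_le u
  set y : Fin d → ℝ := fun i => g fun j => if i = j then 1 else 0
  have hg_apply : ∀ z, g z = ∑ i, z i * y i := fun z => by
    simpa only [smul_eq_mul] using LinearMap.pi_apply_eq_sum_univ g z
  set τ := sortDescPerm |y|
  set ε : Fin d → ℝ := fun i => if 0 ≤ y i then 1 else -1
  set z : Fin d → ℝ := fun i => ε i * v (τ.symm i)
  have hgz : g z = ∑ i, v i * sortDesc |y| i := by
    rw [hg_apply, ← Equiv.sum_comp τ]
    refine sum_congr rfl fun i _ => ?_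
    by_cases h : 0 ≤ y (τ i) <;>
      simp [z, ε, sortDesc, τ, h, abs_of_nonneg, abs_of_neg, not_le.1]
  have hΦz : Φ z = Φ v := by
    change Φ (fun i => ε i * (v ∘ τ.symm) i) = Φ v
    rw [hΦ.2.2.2.2.2 ε (fun i => by by_cases h : 0 ≤ y i <;> simp [ε, h]) (v ∘ τ.symm)]
    exact hΦ.comp_perm τ.symm v
  calc Φ u = g u := hgu.symm
    _ = ∑ i, u i * y i := hg_apply u
    _ ≤ ∑ i, u i * |y| i :=
      sum_le_sum fun i _ => mul_le_mul_of_nonneg_left (le_abs_self _) (hu i)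
    _ ≤ ∑ i, sortDesc u i * sortDesc |y| i := sum_mul_le_sum_sortDesc_mul_sortDesc u |y|
    _ ≤ ∑ i, v i * sortDesc |y| i :=
      sum_mul_le_sum_mul_of_prefixSum_le (antitone_sortDesc _) (fun i => abs_nonneg _) huv
    _ = g z := hgz.symm
    _ ≤ Φ z := hg z
    _ = Φ v := hΦz

end IsSymmetricGauge

section KyFan

variable {d : ℕ}

lemma sum_diag_star_mul_diagonal_mul_le (W : unitaryGroup (Fin d) ℝ) (x : Fin d → ℝ)
    (J : Finset (Fin d)) :
    ∑ j ∈ J, (star (W : Matrix (Fin d) (Fin d) ℝ) * diagonal x * W) j j ≤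
      prefixSum (sortDesc x) #J := by
  set c : Fin d → ℝ := fun m => ∑ j ∈ J, W m j ^ 2
  have hrow : ∀ m, ∑ j, W m j ^ 2 = 1 := fun m => by
    simpa [mul_apply, sq, one_apply] using congrFun₂ (Unitary.coe_mul_star_self W) m m
  have hcol : ∀ j, ∑ m, W m j ^ 2 = 1 := fun j => by
    simpa [mul_apply, sq, one_apply] using congrFun₂ (Unitary.coe_star_mul_self W) j j
  have hc1 : ∀ m, c m ≤ 1 := fun m =>
    (hrow m).symm ▸ sum_le_sum_of_subset_of_nonneg (subset_univ J) fun j _ _ => sq_nonneg _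
  have hc : ∑ m, c m = #J := by
    rw [sum_comm, sum_congr rfl fun j _ => hcol j]
    simp
  calc ∑ j ∈ J, (star (W : Matrix (Fin d) (Fin d) ℝ) * diagonal x * W) j j
      = ∑ m, x m * c m := by
        simp only [c, mul_sum]
        rw [sum_comm]
        refine sum_congr rfl fun j _ => ?_
        simp only [mul_apply, diagonal_apply, star_apply, star_trivial, mul_ite, mul_zero,
          sum_ite_eq', mem_univ, if_true]
        exact sum_congr rfl fun m _ => by ring
    _ ≤ prefixSum (sortDesc x) #J :=
      sum_mul_le_prefixSum_sortDesc x c (card_le_univ J |>.trans_eq (Fintype.card_fin d))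
        (fun m => sum_nonneg fun j _ => sq_nonneg _) hc1 hc

/-- One half of Ky Fan's maximum principle. -/
lemma Matrix.IsHermitian.sum_diag_star_mul_mul_le {H : Matrix (Fin d) (Fin d) ℝ}
    (hH : H.IsHermitian) (U : unitaryGroup (Fin d) ℝ) (J : Finset (Fin d)) :
    ∑ j ∈ J, (star (U : Matrix (Fin d) (Fin d) ℝ) * H * U) j j ≤
      prefixSum (sortDesc hH.eigenvalues) #J := by
  set V := hH.eigenvectorUnitary
  have hH' : star (U : Matrix (Fin d) (Fin d) ℝ) * H * U =
      star ((star V * U : unitaryGroup (Fin d) ℝ) : Matrix (Fin d) (Fin d) ℝ) *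
        diagonal hH.eigenvalues * (star V * U : unitaryGroup (Fin d) ℝ) := by
    conv_lhs => rw [hH.spectral_theorem, Unitary.conjStarAlgAut_apply]
    simp [V, Matrix.mul_assoc]
  rw [hH']
  exact sum_diag_star_mul_diagonal_mul_le _ _ J

lemma Matrix.IsHermitian.two_mul_prefixSum_sortDesc_eigenvalues_le
    {G M N : Matrix (Fin d) (Fin d) ℝ} (hG : G.IsHermitian) (hM : M.IsHermitian)
    (hN : N.IsHermitian) (hMNG : (M + N - (2 : ℝ) • G).PosSemidef) {k : ℕ} (hk : k ≤ d) :
    2 * prefixSum (sortDesc hG.eigenvalues) k ≤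
      prefixSum (sortDesc hM.eigenvalues) k + prefixSum (sortDesc hN.eigenvalues) k := by
  set U := hG.eigenvectorUnitary
  set conj : Matrix (Fin d) (Fin d) ℝ → Matrix (Fin d) (Fin d) ℝ :=
    fun X => star (U : Matrix (Fin d) (Fin d) ℝ) * X * U
  have hdiag : conj G = diagonal hG.eigenvalues := by
    simpa [Function.comp_def] using hG.conjStarAlgAut_star_eigenvectorUnitary
  obtain ⟨J, rfl, hJ⟩ := exists_card_eq_prefixSum_sortDesc_eq_sum hG.eigenvalues hk
  have hpsd : 0 ≤ ∑ j ∈ J, conj (M + N - (2 : ℝ) • G) j j :=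
    sum_nonneg fun j _ =>
      (hMNG.conjTranspose_mul_mul_same (U : Matrix (Fin d) (Fin d) ℝ)).diag_nonneg
  have hsplit : ∑ j ∈ J, conj (M + N - (2 : ℝ) • G) j j =
      ∑ j ∈ J, conj M j j + ∑ j ∈ J, conj N j j - 2 * ∑ j ∈ J, hG.eigenvalues j := by
    have hlin : conj (M + N - (2 : ℝ) • G) = conj M + conj N - (2 : ℝ) • conj G := by
      simp only [conj, Matrix.mul_add, Matrix.add_mul, Matrix.mul_sub, Matrix.sub_mul,
        Matrix.mul_smul, Matrix.smul_mul]
    simp [hlin, hdiag, sum_add_distrib, sum_sub_distrib, mul_sum]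
  have := hM.sum_diag_star_mul_mul_le U J
  have := hN.sum_diag_star_mul_mul_le U J
  rw [hJ]
  linarith

end KyFan

/-- Geodesic midpoint convexity of the unitarily invariant norm
`‖A‖_Φ = Φ(λ(A))` associated to a symmetric gauge function `Φ`:
`‖A # B‖_Φ ≤ (‖A‖_Φ + ‖B‖_Φ)/2`. -/
theorem unitarilyInvariantNorm_geodesically_midpoint_convex {d : ℕ}
    (Φ : (Fin d → ℝ) → ℝ) (hΦ : IsSymmetricGauge Φ)
    {A B : Matrix (Fin d) (Fin d) ℝ} (hA : A.PosDef) (hB : B.PosDef)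
    (hG : (geomMean hA hB).IsHermitian) :
    Φ (hG.eigenvalues) ≤
      (Φ (hA.isHermitian.eigenvalues) + Φ (hB.isHermitian.eigenvalues)) / 2 := by
  set a := sortDesc hA.isHermitian.eigenvalues
  set b := sortDesc hB.isHermitian.eigenvalues
  have hmaj : ∀ k ≤ d,
      prefixSum (sortDesc hG.eigenvalues) k ≤ prefixSum ((2⁻¹ : ℝ) • (a + b)) k := by
    intro k hk
    have := hG.two_mul_prefixSum_sortDesc_eigenvalues_le hA.isHermitian hB.isHermitian
      (posSemidef_add_sub_two_smul_geomMean hA hB) hk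
    rw [prefixSum_smul, prefixSum_add]
    linarith
  calc Φ hG.eigenvalues ≤ Φ ((2⁻¹ : ℝ) • (a + b)) :=
        hΦ.le_of_prefixSum_sortDesc_le (geomMean_posSemidef hA hB).eigenvalues_nonneg hmaj
    _ ≤ 2⁻¹ * (Φ a + Φ b) := by
        rw [hΦ.map_smul, abs_of_pos (by norm_num)]
        gcongr
        exact hΦ.map_add_le a b
    _ = (Φ hA.isHermitian.eigenvalues + Φ hB.isHermitian.eigenvalues) / 2 := by
        rw [show Φ a = _ from hΦ.comp_perm _ _, show Φ b = _ from hΦ.comp_perm _ _]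
        ring
end

section
/- Let A, B be symmetric positive definite d×d matrices and define the S-divergence δ_S²(A,B) := log det((A+B)/2) − (1/2) log det(AB). Then δ_S²(A,B) = Σ_{i=1}^d [ log(1 + λ_i) − (1/2) log λ_i ] − d·log 2, where λ₁,…,λ_d are the eigenvalues of A^{-1}B. In particular, δ_S²(A,B) ≥ 0 with equality iff A = B. -/
open Matrix

/-- The S-divergence `δ_S²(A,B) = log det((A+B)/2) − (1/2) log det(AB)`. -/
noncomputable def Sdiv {d : ℕ} (A B : Matrix (Fin d) (Fin d) ℝ) : ℝ :=
  Real.log (((2 : ℝ)⁻¹ • (A + B)).det) - (1 / 2) * Real.log ((A * B).det)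

/-!
With `T = √(A⁻¹)`, the matrix `A⁻¹B` has the same characteristic polynomial as the positive
definite matrix `TBT`; hence its eigenvalues `μᵢ` are positive, and its spectrum is `{1}` only if
`TBT = 1`, i.e. `A = B`. Writing `B = A (A⁻¹B)` and `A + B = A (1 + A⁻¹B)` gives
`det B = det A ∏ μᵢ` and `det (A + B) = det A ∏ (1 + μᵢ)`, whence the formula. Each summand
`log (1 + μ) - ½ log μ` exceeds `log 2` by `½ log ((1 + μ)² / 4μ) ≥ 0` (AM–GM), with equality only
at `μ = 1`.
-/

open Polynomial Real
open scoped MatrixOrder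

namespace Matrix

variable {n : Type*} [Fintype n] [DecidableEq n]

theorem det_scalar_add_of_charpoly_eq_prod {R : Type*} [CommRing R] {M : Matrix n n R}
    {μ : n → R} (hμ : M.charpoly = ∏ i, (X - C (μ i))) (t : R) :
    (scalar n t + M).det = ∏ i, (t + μ i) := by
  have h := M.eval_charpoly (-t)
  rw [hμ, eval_prod, map_neg, ← neg_add', det_neg] at h
  simp only [eval_sub, eval_X, eval_C, ← neg_add', Finset.prod_neg, Finset.card_univ] at h
  exact ((isUnit_neg_one.pow _).mul_left_cancel h).symm

theorem spectrum_eq_range_of_charpoly_eq_prod {K : Type*} [Field K] {M : Matrix n n K}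
    {μ : n → K} (hμ : M.charpoly = ∏ i, (X - C (μ i))) :
    spectrum K M = Set.range μ := by
  ext x
  rw [mem_spectrum_iff_isRoot_charpoly, hμ, IsRoot.def, eval_prod]
  simp only [eval_sub, eval_X, eval_C, Finset.prod_eq_zero_iff, Finset.mem_univ, true_and,
    sub_eq_zero, Set.mem_range]
  exact exists_congr fun _ => eq_comm

namespace PosDef

variable {A B : Matrix n n ℝ}

theorem spectrum_inv_mul_eq (hA : A.PosDef) (B : Matrix n n ℝ) :
    spectrum ℝ (A⁻¹ * B) = spectrum ℝ (CFC.sqrt A⁻¹ * B * CFC.sqrt A⁻¹) := by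
  set T := CFC.sqrt A⁻¹
  have hcharpoly : (A⁻¹ * B).charpoly = (T * B * T).charpoly := by
    have hTT : T * T = A⁻¹ := CFC.sqrt_mul_sqrt_self A⁻¹ hA.inv.posSemidef.nonneg
    rw [← hTT, mul_assoc, charpoly_mul_comm]
  ext x
  simp only [mem_spectrum_iff_isRoot_charpoly, hcharpoly]

theorem isStrictlyPositive_sqrt_inv_conj (hA : A.PosDef) (hB : B.PosDef) :
    IsStrictlyPositive (CFC.sqrt A⁻¹ * B * CFC.sqrt A⁻¹) := by
  have hT : IsStrictlyPositive (CFC.sqrt A⁻¹) := hA.inv.isStrictlyPositive.sqrt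
  exact hB.isStrictlyPositive.conjugate_of_isUnit_of_isSelfAdjoint _ _ hT.isUnit hT.isSelfAdjoint

theorem pos_of_mem_spectrum_inv_mul (hA : A.PosDef) (hB : B.PosDef) {x : ℝ}
    (hx : x ∈ spectrum ℝ (A⁻¹ * B)) : 0 < x :=
  (hA.isStrictlyPositive_sqrt_inv_conj hB).spectrum_pos (hA.spectrum_inv_mul_eq B ▸ hx)

theorem eq_of_spectrum_inv_mul_subset_one (hA : A.PosDef) (hB : B.PosDef)
    (h : spectrum ℝ (A⁻¹ * B) ⊆ {1}) : A = B := by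
  set T := CFC.sqrt A⁻¹
  have hT : IsStrictlyPositive T := hA.inv.isStrictlyPositive.sqrt
  have hTT : T * T = A⁻¹ := CFC.sqrt_mul_sqrt_self A⁻¹ hA.inv.posSemidef.nonneg
  have hTu : IsUnit T.det := (isUnit_iff_isUnit_det T).mp hT.isUnit
  have hC : T * B * T = 1 :=
    CFC.eq_one_of_spectrum_subset_one _ (hA.spectrum_inv_mul_eq B ▸ h)
      (hA.isStrictlyPositive_sqrt_inv_conj hB).isSelfAdjoint
  calc A = (T * T)⁻¹ := by rw [hTT, nonsing_inv_nonsing_inv A hA.det_pos.ne'.isUnit]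
    _ = T⁻¹ * (T * B * T) * T⁻¹ := by rw [hC, mul_one, mul_inv_rev]
    _ = B := by rw [mul_assoc, mul_assoc, mul_nonsing_inv T hTu, mul_one, ← mul_assoc,
        nonsing_inv_mul T hTu, one_mul]

end PosDef
end Matrix

theorem Real.log_two_le_log_one_add_sub_half_log {x : ℝ} (hx : 0 < x) :
    log 2 ≤ log (1 + x) - 1 / 2 * log x := by
  have h : log (4 * x) ≤ log ((1 + x) ^ 2) :=
    log_le_log (by positivity) (by nlinarith [sq_nonneg (x - 1)])
  rw [log_mul (by norm_num) hx.ne', log_pow, show (4 : ℝ) = 2 ^ 2 by norm_num, log_pow] at h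
  push_cast at h
  linarith

theorem Real.log_two_lt_log_one_add_sub_half_log {x : ℝ} (hx : 0 < x) (hx1 : x ≠ 1) :
    log 2 < log (1 + x) - 1 / 2 * log x := by
  have h : log (4 * x) < log ((1 + x) ^ 2) :=
    log_lt_log (by positivity) (by nlinarith [sq_pos_of_ne_zero (sub_ne_zero.mpr hx1)])
  rw [log_mul (by norm_num) hx.ne', log_pow, show (4 : ℝ) = 2 ^ 2 by norm_num, log_pow] at h
  push_cast at h
  linarith

theorem Sdiv_self {d : ℕ} (A : Matrix (Fin d) (Fin d) ℝ) : Sdiv A A = 0 := by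
  rw [Sdiv, ← two_smul ℝ A, smul_smul, inv_mul_cancel₀ two_ne_zero, one_smul, det_mul, ← sq,
    log_pow]
  ring

theorem Sdiv_eq_sum_log_of_charpoly_eq_prod {d : ℕ} {A B : Matrix (Fin d) (Fin d) ℝ}
    (hA : A.PosDef) {μ : Fin d → ℝ} (hμ : (A⁻¹ * B).charpoly = ∏ i, (X - C (μ i)))
    (hμpos : ∀ i, 0 < μ i) :
    Sdiv A B = (∑ i, (log (1 + μ i) - 1 / 2 * log (μ i))) - d * log 2 := by
  have hAu : IsUnit A.det := hA.det_pos.ne'.isUnit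
  have hdetB : B.det = A.det * ∏ i, μ i := by
    have h := det_scalar_add_of_charpoly_eq_prod hμ 0
    simp only [map_zero, zero_add] at h
    rw [← h, ← det_mul, mul_nonsing_inv_cancel_left _ _ hAu]
  have hdetAB : (A + B).det = A.det * ∏ i, (1 + μ i) := by
    rw [← det_scalar_add_of_charpoly_eq_prod hμ 1, map_one, ← det_mul, mul_add, mul_one,
      mul_nonsing_inv_cancel_left _ _ hAu]
  have hdetA := hA.det_pos.ne'
  have hprod : ∏ i, μ i ≠ 0 := Finset.prod_ne_zero_iff.mpr fun i _ => (hμpos i).ne'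
  have hprod1 : ∏ i, (1 + μ i) ≠ 0 :=
    Finset.prod_ne_zero_iff.mpr fun i _ => by linarith [hμpos i]
  rw [Sdiv, det_smul, det_mul, hdetB, hdetAB, Fintype.card_fin,
    log_mul (by positivity) (mul_ne_zero hdetA hprod1), log_mul hdetA hprod1,
    log_mul hdetA (mul_ne_zero hdetA hprod), log_mul hdetA hprod, log_pow, log_inv,
    log_prod fun i _ => (hμpos i).ne', log_prod fun i _ => by linarith [hμpos i],
    Finset.sum_sub_distrib, ← Finset.mul_sum]
  ring

theorem Sdiv_eigenvalue_formula {d : ℕ} {A B : Matrix (Fin d) (Fin d) ℝ}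
    (hA : A.PosDef) (hB : B.PosDef) (μ : Fin d → ℝ)
    (hμ : (A⁻¹ * B).charpoly = ∏ i, (Polynomial.X - Polynomial.C (μ i))) :
    Sdiv A B = (∑ i, (Real.log (1 + μ i) - (1 / 2) * Real.log (μ i)))
        - d * Real.log 2 ∧
      0 ≤ Sdiv A B ∧ (Sdiv A B = 0 ↔ A = B) := by
  have hspec := spectrum_eq_range_of_charpoly_eq_prod hμ
  have hμpos : ∀ i, 0 < μ i := fun i => hA.pos_of_mem_spectrum_inv_mul hB (hspec ▸ ⟨i, rfl⟩)
  have hformula := Sdiv_eq_sum_log_of_charpoly_eq_prod hA hμ hμpos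
  have hsum : Sdiv A B = ∑ i, (log (1 + μ i) - 1 / 2 * log (μ i) - log 2) := by
    simp [hformula, Finset.sum_sub_distrib]
  have hterm : ∀ i ∈ Finset.univ, 0 ≤ log (1 + μ i) - 1 / 2 * log (μ i) - log 2 :=
    fun i _ => sub_nonneg.mpr (log_two_le_log_one_add_sub_half_log (hμpos i))
  refine ⟨hformula, hsum ▸ Finset.sum_nonneg hterm, fun h => ?_, fun h => h ▸ Sdiv_self A⟩
  refine hA.eq_of_spectrum_inv_mul_subset_one hB (hspec ▸ ?_)
  rintro _ ⟨i, rfl⟩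
  by_contra hi
  have hzero := (Finset.sum_eq_zero_iff_of_nonneg hterm).mp (hsum ▸ h) i (Finset.mem_univ i)
  linarith [log_two_lt_log_one_add_sub_half_log (hμpos i) hi]
end

section
/- The S-divergence is invariant under simultaneous inversion: for all symmetric positive definite d×d matrices A and B, δ_S²(A^{-1}, B^{-1}) = δ_S²(A, B), where δ_S²(A,B) = log det((A+B)/2) − (1/2) log det(AB). -/
open Matrix

theorem Sdiv_inv_inv {d : ℕ} {A B : Matrix (Fin d) (Fin d) ℝ}
    (hA : A.PosDef) (hB : B.PosDef) :
    Sdiv A⁻¹ B⁻¹ = Sdiv A B := by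
  have hAd : IsUnit A.det := isUnit_iff_ne_zero.mpr (ne_of_gt hA.det_pos)
  have hBd : IsUnit B.det := isUnit_iff_ne_zero.mpr (ne_of_gt hB.det_pos)
  have key : A⁻¹ + B⁻¹ = A⁻¹ * (A + B) * B⁻¹ := by
    rw [Matrix.mul_add, Matrix.add_mul, Matrix.nonsing_inv_mul A hAd, Matrix.one_mul,
      Matrix.mul_assoc, Matrix.mul_nonsing_inv B hBd, Matrix.mul_one, add_comm]
  have hsd : 0 < ((2 : ℝ)⁻¹ • (A + B)).det := by
    rw [Matrix.det_smul]
    have := (hA.add hB).det_pos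
    positivity
  have hdet : ((2 : ℝ)⁻¹ • (A⁻¹ + B⁻¹)).det
      = A.det⁻¹ * ((2 : ℝ)⁻¹ • (A + B)).det * B.det⁻¹ := by
    rw [key, Matrix.det_smul, Matrix.det_mul, Matrix.det_mul, Matrix.det_nonsing_inv A,
      Matrix.det_nonsing_inv B, Ring.inverse_eq_inv, Ring.inverse_eq_inv, Matrix.det_smul]
    ring
  unfold Sdiv
  rw [hdet, Matrix.det_mul, Matrix.det_mul, Matrix.det_nonsing_inv, Matrix.det_nonsing_inv,
    Ring.inverse_eq_inv, Ring.inverse_eq_inv]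
  have hA0 : A.det ≠ 0 := ne_of_gt hA.det_pos
  have hB0 : B.det ≠ 0 := ne_of_gt hB.det_pos
  rw [Real.log_mul (by positivity) (by positivity), Real.log_mul (by positivity) (by positivity),
    Real.log_mul (by positivity) (by positivity), Real.log_mul hA0 hB0,
    Real.log_inv, Real.log_inv]
  ring
end

section
/- Let x ∈ ℝ^d be a nonzero vector and β > 0. Then the function g(Σ) := (xᵀ Σ^{-1} x)^β is convex on the set of symmetric positive definite d×d matrices (with respect to Euclidean line segments), being the composition g = exp(β · ℓ) where ℓ(Σ) = log(xᵀΣ^{-1}x) is convex and t ↦ exp(βt) is convex and increasing. -/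
/-!
By Cauchy–Schwarz for the inner product `⟨u, v⟩_S = uᵀ S v`, for every `y` with `x ⬝ y > 0`
we have `2 log (x ⬝ y) - log (yᵀ S y) ≤ log (xᵀ S⁻¹ x)`, with equality at `y = S⁻¹ x`. At
`T = a S₀ + b S₁` take `y = T⁻¹ x`: since `yᵀ T y = a yᵀ S₀ y + b yᵀ S₁ y` and `log` is concave,
`log (xᵀ T⁻¹ x) ≤ a log (xᵀ S₀⁻¹ x) + b log (xᵀ S₁⁻¹ x)`. Finally `t ^ β = exp (β log t)` and
`exp` is convex and increasing.
-/

open Matrix Real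

theorem ConvexOn.exp {E : Type*} [AddCommMonoid E] [Module ℝ E] {s : Set E} {f : E → ℝ}
    (hf : ConvexOn ℝ s f) : ConvexOn ℝ s (fun x => Real.exp (f x)) :=
  ⟨hf.1, fun _ hx _ hy _ _ ha hb hab =>
    (exp_le_exp.2 (hf.2 hx hy ha hb hab)).trans
      (convexOn_exp.2 (Set.mem_univ _) (Set.mem_univ _) ha hb hab)⟩

theorem ConvexOn.rpow_of_log {E : Type*} [AddCommMonoid E] [Module ℝ E] {s : Set E} {f : E → ℝ}
    (hf : ConvexOn ℝ s (fun x => log (f x))) (hpos : ∀ x ∈ s, 0 < f x) {β : ℝ} (hβ : 0 ≤ β) :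
    ConvexOn ℝ s (fun x => f x ^ β) :=
  (hf.smul hβ).exp.congr fun x hx => by
    simp only [smul_eq_mul]
    rw [rpow_def_of_pos (hpos x hx), mul_comm]

namespace Matrix

variable {n : Type*}

theorem convex_setOf_posDef : Convex ℝ {S : Matrix n n ℝ | S.PosDef} :=
  convex_iff_forall_pos.2 fun _ hS _ hT _ _ ha hb _ => (hS.smul ha).add (hT.smul hb)

variable [Fintype n] [DecidableEq n]

theorem PosSemidef.dotProduct_mulVec_mul_le {S : Matrix n n ℝ} (hS : S.PosSemidef)
    (u v : n → ℝ) : (u ⬝ᵥ S *ᵥ v) * (v ⬝ᵥ S *ᵥ u) ≤ (u ⬝ᵥ S *ᵥ u) * (v ⬝ᵥ S *ᵥ v) := by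
  simpa only [toLinearMap₂'_apply'] using
    LinearMap.BilinForm.apply_mul_apply_le_of_forall_zero_le (toLinearMap₂' ℝ S)
      (fun w => by simpa [toLinearMap₂'_apply'] using hS.dotProduct_mulVec_nonneg w) u v

theorem PosDef.mulVec_inv_mulVec {S : Matrix n n ℝ} (hS : S.PosDef) (x : n → ℝ) :
    S *ᵥ (S⁻¹ *ᵥ x) = x := by
  rw [mulVec_mulVec, mul_nonsing_inv _ ((isUnit_iff_isUnit_det _).1 hS.isUnit), one_mulVec]

theorem PosDef.sq_dotProduct_le {S : Matrix n n ℝ} (hS : S.PosDef) (x y : n → ℝ) :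
    (x ⬝ᵥ y) ^ 2 ≤ (x ⬝ᵥ S⁻¹ *ᵥ x) * (y ⬝ᵥ S *ᵥ y) := by
  have hSx := hS.mulVec_inv_mulVec x
  have hS_left (v : n → ℝ) : (S⁻¹ *ᵥ x) ⬝ᵥ S *ᵥ v = x ⬝ᵥ v := by
    rw [dotProduct_mulVec, ← mulVec_transpose, show Sᵀ = S from hS.isHermitian, hSx]
  have := hS.posSemidef.dotProduct_mulVec_mul_le (S⁻¹ *ᵥ x) y
  rwa [hS_left, hS_left, hSx, dotProduct_comm y, ← sq] at this

theorem PosDef.two_mul_log_dotProduct_sub_log_le {S : Matrix n n ℝ} (hS : S.PosDef)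
    {x y : n → ℝ} (hy : y ≠ 0) (hxy : 0 < x ⬝ᵥ y) :
    2 * log (x ⬝ᵥ y) - log (y ⬝ᵥ S *ᵥ y) ≤ log (x ⬝ᵥ S⁻¹ *ᵥ x) := by
  have hq : 0 < y ⬝ᵥ S *ᵥ y := by simpa using hS.dotProduct_mulVec_pos hy
  have := log_le_log (by positivity) ((div_le_iff₀ hq).2 (hS.sq_dotProduct_le x y))
  rwa [log_div (by positivity) hq.ne', log_pow, Nat.cast_ofNat] at this

theorem convexOn_log_dotProduct_inv_mulVec {x : n → ℝ} (hx : x ≠ 0) :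
    ConvexOn ℝ {S : Matrix n n ℝ | S.PosDef} (fun S => log (x ⬝ᵥ S⁻¹ *ᵥ x)) := by
  refine convexOn_iff_forall_pos.2 ⟨convex_setOf_posDef, fun S₀ h₀ S₁ h₁ a b ha hb hab => ?_⟩
  have hT : (a • S₀ + b • S₁).PosDef := convex_setOf_posDef h₀ h₁ ha.le hb.le hab
  set y := (a • S₀ + b • S₁)⁻¹ *ᵥ x
  have hTy : (a • S₀ + b • S₁) *ᵥ y = x := hT.mulVec_inv_mulVec x
  have hxy : 0 < x ⬝ᵥ y := by simpa using hT.inv.dotProduct_mulVec_pos hx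
  have hy : y ≠ 0 := fun h => hx (by rw [← hTy, h, mulVec_zero])
  have hquad : a * (y ⬝ᵥ S₀ *ᵥ y) + b * (y ⬝ᵥ S₁ *ᵥ y) = x ⬝ᵥ y := by
    rw [dotProduct_comm x, ← hTy, add_mulVec, dotProduct_add, smul_mulVec, smul_mulVec,
      dotProduct_smul, dotProduct_smul, smul_eq_mul, smul_eq_mul]
  have hconc : a * log (y ⬝ᵥ S₀ *ᵥ y) + b * log (y ⬝ᵥ S₁ *ᵥ y) ≤ log (x ⬝ᵥ y) := by
    rw [← hquad]
    exact strictConcaveOn_log_Ioi.concaveOn.2 (by simpa using h₀.dotProduct_mulVec_pos hy)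
      (by simpa using h₁.dotProduct_mulVec_pos hy) ha.le hb.le hab
  have h₀' := mul_le_mul_of_nonneg_left (h₀.two_mul_log_dotProduct_sub_log_le hy hxy) ha.le
  have h₁' := mul_le_mul_of_nonneg_left (h₁.two_mul_log_dotProduct_sub_log_le hy hxy) hb.le
  have hsplit : log (x ⬝ᵥ y) = a * log (x ⬝ᵥ y) + b * log (x ⬝ᵥ y) := by
    rw [← add_mul, hab, one_mul]
  simp only [smul_eq_mul]
  linarith

end Matrix

/-- Euclidean convexity of `Σ ↦ (xᵀ S⁻¹ x)^β` on the positive definite cone. -/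
theorem matrix_fractional_rpow_convexOn {d : ℕ} (x : Fin d → ℝ)
    (hx : x ≠ 0) (β : ℝ) (hβ : 0 < β) :
    ConvexOn ℝ {S : Matrix (Fin d) (Fin d) ℝ | S.PosDef}
      (fun S => (x ⬝ᵥ S⁻¹ *ᵥ x) ^ β) :=
  (convexOn_log_dotProduct_inv_mulVec hx).rpow_of_log
    (fun _ hS => by simpa using hS.inv.dotProduct_mulVec_pos hx) hβ.le
end
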